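/- Let q be a prime with q ≡ 3 (mod 4), let s₁,…,s₆ be odd integers and t₁,…,t₆ be even integers, all in the interval [1−q, q−1]. Then there exist odd integers k₁, k₂ and even integers l₁,…,l₆ such that k₁² + k₂² + Σᵢ₌₁⁶ (k₁sᵢ + k₂tᵢ − lᵢq)² < 4q². -/
import Mathlib

/-- reduction of `x` modulo `2*Q` into the window `[-(Q-1), Q]` -/
private def red (Q x : ℤ) : ℤ := (x + (Q - 1)) % (2 * Q) - (Q - 1)

private lemma red_dvd (Q x : ℤ) : 2 * Q ∣ x - red Q x := by
  have h := Int.emod_def (x + (Q - 1)) (2 * Q)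
  exact ⟨(x + (Q - 1)) / (2 * Q), by unfold red; linarith [h]⟩

private lemma red_bounds (Q x : ℤ) (hQ : 0 < Q) : -(Q - 1) ≤ red Q x ∧ red Q x ≤ Q := by
  have h1 := Int.emod_nonneg (x + (Q - 1)) (by positivity : (2 * Q) ≠ 0)
  have h2 := Int.emod_lt_of_pos (x + (Q - 1)) (by positivity : 0 < 2 * Q)
  unfold red; omega

private lemma close_eq {N y z : ℤ} (h : N ∣ y - z) (h2 : |y - z| < N) :
    y = z := by
  have := Int.eq_zero_of_abs_lt_dvd h h2; omega

/-- the odd representative of `u : ZMod q` in `[-(q-1), q]` -/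
private def rep (q : ℕ) (u : ZMod q) : ℤ := red q ((u.val : ℤ) + q * (1 - u.val))

private lemma rep_spec (q : ℕ) (u : ZMod q) :
    2 * (q : ℤ) ∣ ((u.val : ℤ) + q * (1 - u.val)) - rep q u := red_dvd _ _

private lemma rep_odd (q : ℕ) (hq : Odd (q : ℤ)) (u : ZMod q) : Odd (rep q u) := by
  obtain ⟨c, hc⟩ := hq
  obtain ⟨d, hd⟩ := rep_spec q u
  refine ⟨c * (1 - u.val) - q * d, ?_⟩
  rw [hc] at hd ⊢
  linear_combination -hd

private lemma rep_bounds (q : ℕ) (hq : 0 < q) (u : ZMod q) :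
    -((q:ℤ) - 1) ≤ rep q u ∧ rep q u ≤ q :=
  red_bounds _ _ (by exact_mod_cast hq)

private lemma rep_cast (q : ℕ) [NeZero q] (u : ZMod q) : ((rep q u : ℤ) : ZMod q) = u := by
  obtain ⟨d, hd⟩ := rep_spec q u
  have h2 : (rep q u : ℤ) = (u.val : ℤ) - q * (2 * d - (1 - u.val)) := by
    linear_combination -hd
  rw [h2]
  push_cast
  simp [ZMod.natCast_rightInverse u]

/-- key congruence: for odd `x`, `x ≡ rep q (x mod q)` mod `2q`. -/
private lemma rep_congr (q : ℕ) [NeZero q] (hq : Odd (q:ℤ)) (x : ℤ) (hx : Odd x) :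
    2 * (q : ℤ) ∣ x - rep q ((x : ZMod q)) := by
  have h2 : (2 : ℤ) ∣ x - rep q ((x : ZMod q)) := by
    obtain ⟨a, ha⟩ := hx
    obtain ⟨b, hb⟩ := rep_odd q hq (x : ZMod q)
    exact ⟨a - b, by omega⟩
  have hqd : (q : ℤ) ∣ x - rep q ((x : ZMod q)) := by
    rw [← ZMod.intCast_zmod_eq_zero_iff_dvd]
    push_cast
    rw [rep_cast]
    ring
  have hcop : IsCoprime (2 : ℤ) (q : ℤ) := by
    rw [Int.isCoprime_iff_gcd_eq_one]
    have : Nat.Coprime 2 q := Nat.coprime_two_left.mpr (by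
      rcases hq with ⟨c, hc⟩
      exact ⟨c.toNat, by omega⟩)
    simpa [Int.gcd] using this
  exact hcop.mul_dvd h2 hqd

/-- sum of squares of odd numbers -/
private lemma sum_odd_sq (n : ℕ) :
    3 * ∑ c ∈ Finset.range n, (2 * (c : ℤ) + 1) ^ 2 = n * (4 * (n:ℤ) ^ 2 - 1) := by
  induction n with
  | zero => simp
  | succ n ih =>
    rw [Finset.sum_range_succ, mul_add, ih]
    push_cast
    ring

private lemma sum_pair (f : ℕ → ℤ) (m : ℕ) :
    ∑ j ∈ Finset.range (2 * m + 1), f j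
      = f 0 + ∑ c ∈ Finset.range m, (f (2 * c + 1) + f (2 * c + 2)) := by
  induction m with
  | zero => simp
  | succ m ih =>
    have : 2 * (m + 1) + 1 = (2 * m + 1) + 1 + 1 := by ring
    rw [this, Finset.sum_range_succ, Finset.sum_range_succ, ih, Finset.sum_range_succ]
    ring

private lemma rep_sq_val (q : ℕ) [NeZero q] (hq : Odd (q:ℤ)) (j : ℕ) (hj : j < q) :
    (rep q ((j : ℕ) : ZMod q)) ^ 2 = if Odd j then ((j:ℤ)) ^ 2 else ((j:ℤ) - q) ^ 2 := by
  have hq1 : (1:ℤ) ≤ q := by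
    rcases hq with ⟨c, hc⟩; omega
  set u : ZMod q := ((j : ℕ) : ZMod q) with hu
  have hval : (u.val : ℤ) = j := by
    rw [hu, ZMod.val_cast_of_lt hj]
  obtain ⟨d, hd⟩ := rep_spec q u
  rw [hval] at hd
  have hb := rep_bounds q (by omega) u
  have hjq : (j : ℤ) < q := by exact_mod_cast hj
  rcases Nat.even_or_odd j with hje | hjo
  · -- even case
    rw [if_neg (by simpa [Nat.odd_iff, Nat.even_iff] using hje)]
    obtain ⟨c, hc⟩ : Even j := hje
    have hcz : (j : ℤ) = 2 * c := by exact_mod_cast (by omega : j = 2 * c)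
    rcases Nat.eq_zero_or_pos j with h0 | hpos
    · -- j = 0 : rep = q
      have hj0 : (j : ℤ) = 0 := by exact_mod_cast h0
      have heq : rep q u = q := by
        refine close_eq (N := 2 * q) ⟨-d, ?_⟩ ?_
        · rw [hj0] at hd; linear_combination -hd
        · rw [abs_lt]; constructor <;> linarith [hb.1, hb.2]
      rw [heq, hj0]; ring
    · -- j even, positive: rep = j - q
      have hjp : (1:ℤ) ≤ j := by exact_mod_cast hpos
      have heq : rep q u = (j:ℤ) - q := by
        refine close_eq (N := 2 * q) ⟨(1 - c : ℤ) - d, ?_⟩ ?_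
        · rw [hcz] at hd ⊢; linear_combination -hd
        · rw [abs_lt]; constructor <;> linarith [hb.1, hb.2]
      rw [heq]
  · rw [if_pos hjo]
    obtain ⟨c, hc⟩ := hjo
    have hcz : (j : ℤ) = 2 * c + 1 := by exact_mod_cast hc
    have heq : rep q u = (j:ℤ) := by
      refine close_eq (N := 2 * q) ⟨-(c : ℤ) - d, ?_⟩ ?_
      · rw [hcz] at hd ⊢; linear_combination -hd
      · rw [abs_lt]; constructor <;> linarith [hb.1, hb.2]
    rw [heq]

theorem stmt_1 (q : ℕ) (hq : q.Prime) (hq4 : q % 4 = 3)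
    (s t : Fin 6 → ℤ) (hs : ∀ i, Odd (s i)) (ht : ∀ i, Even (t i))
    (hsb : ∀ i, 1 - (q : ℤ) ≤ s i ∧ s i ≤ (q : ℤ) - 1)
    (htb : ∀ i, 1 - (q : ℤ) ≤ t i ∧ t i ≤ (q : ℤ) - 1) :
    ∃ k₁ k₂ : ℤ, ∃ l : Fin 6 → ℤ, Odd k₁ ∧ Odd k₂ ∧ (∀ i, Even (l i)) ∧
      k₁ ^ 2 + k₂ ^ 2 + ∑ i, (k₁ * s i + k₂ * t i - l i * q) ^ 2 < 4 * (q : ℤ) ^ 2 := by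
  haveI : Fact q.Prime := ⟨hq⟩
  haveI : NeZero q := ⟨hq.ne_zero⟩
  have hq3 : 3 ≤ q := by
    rcases Nat.lt_or_ge q 3 with h | h
    · interval_cases q <;> omega
    · exact h
  have hqoddN : q % 2 = 1 := by omega
  have hqodd : Odd (q : ℤ) := by
    refine ⟨(q : ℤ) / 2, ?_⟩
    omega
  set Q : ℤ := (q : ℤ) with hQ
  have hQ3 : (3:ℤ) ≤ Q := by rw [hQ]; exact_mod_cast hq3
  -- E₂ = ∑ (rep u)^2, with 3 E₂ = Q^3 + 2Q
  set E : ℤ := ∑ u : ZMod q, (rep q u) ^ 2 with hE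
  have hsum_range : E = ∑ j ∈ Finset.range q, (rep q ((j:ℕ) : ZMod q)) ^ 2 := by
    rw [hE]
    refine Finset.sum_nbij' (fun u => u.val) (fun j => ((j : ℕ) : ZMod q)) ?_ ?_ ?_ ?_ ?_
    · intro u _; exact Finset.mem_range.mpr (ZMod.val_lt u)
    · intro j _; exact Finset.mem_univ _
    · intro u _; exact ZMod.natCast_rightInverse u
    · intro j hj; exact ZMod.val_cast_of_lt (Finset.mem_range.mp hj)
    · intro u _; rw [ZMod.natCast_rightInverse u]
  have hEval : 3 * E = Q ^ 3 + 2 * Q := by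
    rw [hsum_range]
    have hm : q = 2 * (q / 2) + 1 := by omega
    set m := q / 2 with hmdef
    have h2m : Finset.range q = Finset.range (2 * m + 1) := by rw [← hm]
    rw [h2m, sum_pair]
    have h0 : (rep q ((0 : ℕ) : ZMod q)) ^ 2 = ((0:ℤ) - q) ^ 2 := by
      rw [rep_sq_val q hqodd 0 (by omega)]
      simp
    have hsplit : ∀ c ∈ Finset.range m,
        (rep q (((2*c+1 : ℕ)) : ZMod q)) ^ 2 + (rep q (((2*c+2 : ℕ)) : ZMod q)) ^ 2
          = (2*(c:ℤ)+1)^2 + ((2*(c:ℤ)+2) - Q)^2 := by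
      intro c hc
      have hc' : c < m := Finset.mem_range.mp hc
      rw [rep_sq_val q hqodd (2*c+1) (by omega), rep_sq_val q hqodd (2*c+2) (by omega)]
      rw [if_pos ⟨c, by omega⟩, if_neg (by simp [Nat.odd_iff])]
      push_cast; ring
    rw [Finset.sum_congr rfl hsplit, h0, Finset.sum_add_distrib]
    have hrefl : ∑ c ∈ Finset.range m, ((2*(c:ℤ)+2) - Q)^2
        = ∑ c ∈ Finset.range m, (2*(c:ℤ)+1)^2 := by
      rw [← Finset.sum_range_reflect]
      apply Finset.sum_congr rfl
      intro c hc
      have hc' : c < m := Finset.mem_range.mp hc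
      have hQm : Q = 2 * (m:ℤ) + 1 := by rw [hQ]; exact_mod_cast hm
      have : ((m - 1 - c : ℕ) : ℤ) = (m : ℤ) - 1 - c := by
        push_cast [Nat.cast_sub (by omega : 1 + c ≤ m)]
        omega
      rw [this, hQm]
      ring
    rw [hrefl]
    have hos := sum_odd_sq m
    have hQm : Q = 2 * (m:ℤ) + 1 := by rw [hQ]; exact_mod_cast hm
    rw [hQm]
    push_cast
    nlinarith [hos]
  -- affine sums are invariant
  have haff : ∀ (a b : ZMod q), a ≠ 0 →
      ∑ u : ZMod q, (rep q (a * u + b)) ^ 2 = E := by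
    intro a b ha
    rw [hE]
    exact Fintype.sum_bijective (fun u => a * u + b)
      (((Equiv.mulLeft₀ a ha).trans (Equiv.addRight b)).bijective) _ _ (fun u => rfl)
  -- s i is invertible mod q
  have hsne : ∀ i, ((s i : ZMod q)) ≠ 0 := by
    intro i h
    rw [ZMod.intCast_zmod_eq_zero_iff_dvd] at h
    have := Int.eq_zero_of_abs_lt_dvd h (by
      have h1 := (hsb i).1; have h2 := (hsb i).2
      rw [abs_lt]; constructor <;> omega)
    rcases hs i with ⟨c, hc⟩
    omega
  -- the function F
  set r : Fin 6 → ZMod q → ZMod q → ℤ :=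
    fun i u v => rep q ((s i : ZMod q) * u + (t i : ZMod q) * v) with hr
  set F : ZMod q → ZMod q → ℤ :=
    fun u v => (rep q u)^2 + (rep q v)^2 + ∑ i, (r i u v)^2 with hF
  -- total sum
  have hcard : (Finset.univ : Finset (ZMod q)).card = q := by
    simp [ZMod.card]
  have hA : (∑ u : ZMod q, ∑ _v : ZMod q, (rep q u)^2) = Q * E := by
    rw [hE, Finset.mul_sum]
    exact Finset.sum_congr rfl fun u _ => by
      rw [Finset.sum_const, hcard, nsmul_eq_mul]
  have hB : (∑ _u : ZMod q, ∑ v : ZMod q, (rep q v)^2) = Q * E := by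
    rw [Finset.sum_const, hcard, nsmul_eq_mul, hE]
  have hC : (∑ u : ZMod q, ∑ v : ZMod q, ∑ i, (r i u v)^2) = 6 * Q * E := by
    rw [Finset.sum_comm]
    have hv : ∀ v : ZMod q, (∑ u : ZMod q, ∑ i, (r i u v)^2) = 6 * E := by
      intro v
      rw [Finset.sum_comm]
      have hi : ∀ i : Fin 6, (∑ u : ZMod q, (r i u v)^2) = E := by
        intro i
        exact haff (s i : ZMod q) ((t i : ZMod q) * v) (hsne i)
      rw [Finset.sum_congr rfl (fun i _ => hi i), Finset.sum_const, Finset.card_univ,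
        Fintype.card_fin, nsmul_eq_mul]
      push_cast
      ring
    rw [Finset.sum_congr rfl (fun v _ => hv v), Finset.sum_const, hcard, nsmul_eq_mul]
    ring
  have htot : ∑ u : ZMod q, ∑ v : ZMod q, F u v = 8 * Q * E := by
    have : ∑ u : ZMod q, ∑ v : ZMod q, F u v
        = (∑ u : ZMod q, ∑ _v : ZMod q, (rep q u)^2)
          + (∑ _u : ZMod q, ∑ v : ZMod q, (rep q v)^2)
          + (∑ u : ZMod q, ∑ v : ZMod q, ∑ i, (r i u v)^2) := by
      rw [hF]
      simp only [← Finset.sum_add_distrib]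
    rw [this, hA, hB, hC]
    ring
  -- existence of a good pair
  have hex : ∃ u v : ZMod q, F u v < 4 * Q ^ 2 := by
    by_contra hcon
    push_neg at hcon
    have hge : Q * (Q * (4 * Q ^ 2)) ≤ ∑ u : ZMod q, ∑ v : ZMod q, F u v := by
      calc Q * (Q * (4 * Q ^ 2)) = ∑ _u : ZMod q, ∑ _v : ZMod q, (4 * Q ^ 2) := by
            rw [Finset.sum_const, Finset.sum_const, hcard, nsmul_eq_mul, nsmul_eq_mul, ← hQ]
        _ ≤ ∑ u : ZMod q, ∑ v : ZMod q, F u v := by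
            refine Finset.sum_le_sum fun u _ => Finset.sum_le_sum fun v _ => hcon u v
    rw [htot] at hge
    have h1 : 3 * (Q * (Q * (4 * Q ^ 2))) ≤ 8 * Q * (3 * E) := by linarith
    rw [hEval] at h1
    have h9 : (9:ℤ) ≤ Q ^ 2 := by nlinarith
    have h4 : 9 * Q ^ 2 ≤ Q ^ 2 * Q ^ 2 := by nlinarith [sq_nonneg Q]
    nlinarith [h9, h4]
  obtain ⟨u, v, huv⟩ := hex
  -- construct the witnesses
  refine ⟨rep q u, rep q v, ?_⟩
  set k₁ : ℤ := rep q u with hk₁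
  set k₂ : ℤ := rep q v with hk₂
  have hxodd : ∀ i, Odd (k₁ * s i + k₂ * t i) := fun i =>
    ((rep_odd q hqodd u).mul (hs i)).add_even ((ht i).mul_left k₂)
  have hrep_eq : ∀ i, rep q ((k₁ * s i + k₂ * t i : ℤ) : ZMod q) = r i u v := by
    intro i
    have : ((k₁ * s i + k₂ * t i : ℤ) : ZMod q) = (s i : ZMod q) * u + (t i : ZMod q) * v := by
      push_cast
      rw [hk₁, hk₂, rep_cast, rep_cast]
      ring
    rw [this, hr]
  have hdvd : ∀ i, 2 * Q ∣ (k₁ * s i + k₂ * t i) - r i u v := by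
    intro i
    have := rep_congr q hqodd (k₁ * s i + k₂ * t i) (hxodd i)
    rwa [hrep_eq i] at this
  refine ⟨fun i => 2 * ((k₁ * s i + k₂ * t i - r i u v) / (2 * Q)),
    rep_odd q hqodd u, rep_odd q hqodd v, ?_, ?_⟩
  · intro i
    exact ⟨(k₁ * s i + k₂ * t i - r i u v) / (2 * Q), by ring⟩
  · have hlq : ∀ i, (2 * ((k₁ * s i + k₂ * t i - r i u v) / (2 * Q))) * Q
        = k₁ * s i + k₂ * t i - r i u v := by
      intro i
      have h := Int.ediv_mul_cancel (hdvd i)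
      linarith [h]
    have hterm : ∀ i : Fin 6,
        (k₁ * s i + k₂ * t i - (2 * ((k₁ * s i + k₂ * t i - r i u v) / (2 * Q))) * Q) ^ 2
          = (r i u v) ^ 2 := by
      intro i
      rw [hlq i]
      ring
    calc k₁ ^ 2 + k₂ ^ 2 + ∑ i, (k₁ * s i + k₂ * t i
            - (2 * ((k₁ * s i + k₂ * t i - r i u v) / (2 * Q))) * (q:ℤ)) ^ 2
        = k₁ ^ 2 + k₂ ^ 2 + ∑ i, (r i u v) ^ 2 := by
          rw [Finset.sum_congr rfl fun i _ => hterm i]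
      _ = F u v := rfl
      _ < 4 * (q:ℤ) ^ 2 := huv
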